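/- arXiv:2509.20771 — 2 statements merged into one kernel-verified Lean document; each statement's English description precedes it below -/
import Mathlib

section
/- For all positive integers s and t with s > 1, t·C(s,t) ≤ A(s,t+1) − 2. -/
/-- The Ackermann function of the paper, defined for positive integers `s, t`:
`A(1,t) = 2t`, `A(s,1) = 2`, and `A(s,t) = A(s-1, A(s,t-1))` for `s, t > 1`.
(The value at arguments equal to `0` is junk.) -/
def A : ℕ → ℕ → ℕ
  | 0, _ => 0
  | 1, t => 2 * t
  | _+2, 0 => 0
  | _+2, 1 => 2
  | s+2, t+2 => A (s+1) (A (s+2) (t+1))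
termination_by s t => (s, t)

/-- The function `C` of Füredi and Hajnal, defined for positive integers `s, t`:
`C(1,t) = 1`, `C(s,1) = 2` for `s > 1`, and `C(s,t) = C(s,t-1) * C(s-1, C(s,t-1))` for `s, t > 1`.
(The value at arguments equal to `0` is junk.) -/
def C : ℕ → ℕ → ℕ
  | 0, _ => 0
  | 1, _ => 1
  | _+2, 0 => 0
  | _+2, 1 => 2
  | s+2, t+2 => C (s+2) (t+1) * C (s+1) (C (s+2) (t+1))
termination_by s t => (s, t)

/-! Strengthen the claim to `t * C(s,t) + 2 ≤ A(s,t+1)` and induct lexicographically on `(s,t)`.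
For `s ≥ 2` the map `A(s,·)` at least doubles at each step, so `(k+1) * A(s,n) ≤ A(s,n+k)`.
In the step from `t` to `t+1`, put `c = C(s,t)`: the hypothesis at `(s,t)` gives
`A(s,t+1) ≥ (c+1) + (t+1)`, the hypothesis at `(s-1,c)` gives `c * C(s-1,c) + 2 ≤ A(s-1,c+1)`,
and the `t+1` further steps from `c+1` to `A(s,t+1)` of `A(s-1,·)` supply the factor `t+2`. -/

theorem A_one_left (t : ℕ) : A 1 t = 2 * t := by simp [A]

theorem A_succ_one (s : ℕ) : A (s + 1) 1 = 2 := by cases s <;> simp [A]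

theorem A_succ_succ (s t : ℕ) : A (s + 2) (t + 2) = A (s + 1) (A (s + 2) (t + 1)) := by
  rw [A]

theorem C_one_left (t : ℕ) : C 1 t = 1 := by simp [C]

theorem C_succ_succ_one (s : ℕ) : C (s + 2) 1 = 2 := by simp [C]

theorem C_succ_succ (s t : ℕ) :
    C (s + 2) (t + 2) = C (s + 2) (t + 1) * C (s + 1) (C (s + 2) (t + 1)) := by
  rw [C]

theorem two_mul_le_A : ∀ {s t : ℕ}, 0 < s → 0 < t → 2 * t ≤ A s t
  | 0, _, hs, _ => absurd hs (lt_irrefl 0)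
  | 1, t, _, _ => (A_one_left t).ge
  | _ + 2, 0, _, ht => absurd ht (lt_irrefl 0)
  | s + 2, 1, _, _ => (A_succ_one (s + 1)).ge
  | s + 2, t + 2, _, _ => by
    have hA : 2 * (t + 1) ≤ A (s + 2) (t + 1) := two_mul_le_A (by omega) (by omega)
    have hA' := two_mul_le_A (s := s + 1) (t := A (s + 2) (t + 1)) (by omega) (by omega)
    rw [A_succ_succ]
    omega
termination_by s t => (s, t)

theorem two_mul_A_le_A_succ {s t : ℕ} (hs : 2 ≤ s) (ht : 0 < t) : 2 * A s t ≤ A s (t + 1) := by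
  obtain ⟨s, rfl⟩ := Nat.exists_eq_add_of_le' hs
  obtain ⟨t, rfl⟩ := Nat.exists_eq_add_one.mpr ht
  have hA : 2 * (t + 1) ≤ A (s + 2) (t + 1) := two_mul_le_A (by omega) (by omega)
  rw [A_succ_succ]
  exact two_mul_le_A (by omega) (by omega)

theorem succ_mul_A_le_A_add {s t : ℕ} (hs : 2 ≤ s) (ht : 0 < t) (k : ℕ) :
    (k + 1) * A s t ≤ A s (t + k) := by
  induction k with
  | zero => simp
  | succ k ih =>
    calc (k + 2) * A s t ≤ 2 * ((k + 1) * A s t) := by nlinarith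
      _ ≤ 2 * A s (t + k) := by omega
      _ ≤ A s (t + k + 1) := two_mul_A_le_A_succ hs (by omega)

theorem C_pos : ∀ {s t : ℕ}, 0 < s → 0 < t → 0 < C s t
  | 0, _, hs, _ => absurd hs (lt_irrefl 0)
  | 1, t, _, _ => by rw [C_one_left]; exact one_pos
  | _ + 2, 0, _, ht => absurd ht (lt_irrefl 0)
  | s + 2, 1, _, _ => by rw [C_succ_succ_one]; exact two_pos
  | s + 2, t + 2, _, _ => by
    have hC : 0 < C (s + 2) (t + 1) := C_pos (by omega) (by omega)
    rw [C_succ_succ]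
    exact Nat.mul_pos hC (C_pos (by omega) hC)
termination_by s t => (s, t)

theorem C_two {t : ℕ} (ht : 0 < t) : C 2 t = 2 := by
  induction t, ht using Nat.le_induction with
  | base => exact C_succ_succ_one 0
  | succ t ht ih =>
    obtain ⟨t, rfl⟩ := Nat.exists_eq_add_one.mpr ht
    rw [C_succ_succ, ih, C_one_left, mul_one]

theorem mul_C_add_two_le_A : ∀ {s t : ℕ}, 2 ≤ s → 0 < t → t * C s t + 2 ≤ A s (t + 1)
  | 0, _, hs, _ | 1, _, hs, _ => absurd hs (by omega)
  | 2, t, _, ht => by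
    have hA := succ_mul_A_le_A_add le_rfl zero_lt_one t
    rw [C_two ht, A_succ_one, add_comm 1 t] at *
    omega
  | _ + 3, 0, _, ht => absurd ht (lt_irrefl 0)
  | s + 3, 1, _, _ => by
    have hA := two_mul_A_le_A_succ (s := s + 3) (t := 1) (by omega) one_pos
    rw [C_succ_succ_one, A_succ_one] at *
    omega
  | s + 3, t + 2, _, _ => by
    set c := C (s + 3) (t + 1)
    have hc : 0 < c := C_pos (by omega) (by omega)
    have hc' : c * C (s + 2) c + 2 ≤ A (s + 2) (c + 1) := mul_C_add_two_le_A (by omega) hc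
    have ha : (t + 1) * c + 2 ≤ A (s + 3) (t + 2) := mul_C_add_two_le_A (by omega) (by omega)
    have hgap : c + 1 + (t + 1) ≤ A (s + 3) (t + 2) := by nlinarith
    obtain ⟨j, hj⟩ := Nat.exists_eq_add_of_le hgap
    show (t + 2) * C (s + 1 + 2) (t + 2) + 2 ≤ A (s + 1 + 2) (t + 1 + 2)
    rw [C_succ_succ, A_succ_succ]
    calc (t + 2) * (c * C (s + 2) c) + 2 ≤ (t + 1 + j + 1) * A (s + 2) (c + 1) := by nlinarith
      _ ≤ A (s + 2) (c + 1 + (t + 1 + j)) := succ_mul_A_le_A_add (by omega) (by omega) _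
      _ = A (s + 2) (A (s + 3) (t + 2)) := by rw [hj]; ring_nf
termination_by s t => (s, t)

/-- For all positive integers `s` and `t` with `s > 1`, `t * C(s,t) ≤ A(s,t+1) - 2`. -/
theorem mul_C_le_ackermann_sub_two (s t : ℕ) (hs : 1 < s) (ht : 0 < t) :
    t * C s t ≤ A s (t + 1) - 2 :=
  Nat.le_sub_of_add_le (mul_C_add_two_le_A hs ht)
end

section
/- For all positive integers s and t with s > 1, K(s,t) ≥ A(s,t). -/
/-- The pair `(K(s,t), K'(s,t))` of auxiliary functions, defined for positive integers `s, t`: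
`K(1,t) = 2`, `K'(1,t) = 5`; `K(s,1) = 2^s`, `K'(s,1) = 2^s + 3`; and for `s, t > 1`,
`K(s,t) = K(s,t-1) * K(s-1, K'(s,t-1))` and
`K'(s,t) = K'(s,t-1) * K(s-1, K'(s,t-1)) + K'(s-1, K'(s,t-1))`.
(The value at arguments equal to `0` is junk.) -/
def KK : ℕ → ℕ → ℕ × ℕ
  | 0, _ => (0, 0)
  | 1, _ => (2, 5)
  | _+2, 0 => (0, 0)
  | s+2, 1 => (2^(s+2), 2^(s+2) + 3)
  | s+2, t+2 =>
    let p := KK (s+2) (t+1)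
    let q := KK (s+1) p.2
    (p.1 * q.1, p.2 * q.1 + q.2)
termination_by s t => (s, t)

/-- The function `K(s,t)`. -/
def K (s t : ℕ) : ℕ := (KK s t).1

/-- The function `K'(s,t)`. -/
def K' (s t : ℕ) : ℕ := (KK s t).2

lemma A_rec (s t : ℕ) : A (s+2) (t+2) = A (s+1) (A (s+2) (t+1)) := by simp [A]

lemma K_rec (s t : ℕ) : K (s+2) (t+2) = K (s+2) (t+1) * K (s+1) (K' (s+2) (t+1)) := by
  simp [K, K', KK]

lemma K'_rec (s t : ℕ) :
    K' (s+2) (t+2) = K' (s+2) (t+1) * K (s+1) (K' (s+2) (t+1)) + K' (s+1) (K' (s+2) (t+1)) := by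
  simp [K, K', KK]

lemma A_ge_two_mul : ∀ s t : ℕ, 1 ≤ s → 1 ≤ t → 2 * t ≤ A s t
  | 0, _, h, _ => absurd h (by omega)
  | 1, t, _, _ => le_of_eq (by simp [A])
  | _+2, 0, _, h => absurd h (by omega)
  | s+2, 1, _, _ => by simp [A]
  | s+2, t+2, _, _ => by
    have h1 : 2 * (t+1) ≤ A (s+2) (t+1) := A_ge_two_mul (s+2) (t+1) (by omega) (by omega)
    have h2 : 2 * A (s+2) (t+1) ≤ A (s+1) (A (s+2) (t+1)) :=
      A_ge_two_mul (s+1) _ (by omega) (by omega)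
    have h3 := A_rec s t
    omega
termination_by s t => (s, t)

lemma A_le_succ (s t : ℕ) (hs : 1 ≤ s) (ht : 1 ≤ t) : A s t ≤ A s (t+1) := by
  match s, t with
  | 1, t => simp [A]
  | s+2, t+1 =>
    rw [A_rec]
    have h1 : 2 * (t+1) ≤ A (s+2) (t+1) := A_ge_two_mul _ _ (by omega) (by omega)
    have h2 : 2 * A (s+2) (t+1) ≤ A (s+1) (A (s+2) (t+1)) :=
      A_ge_two_mul (s+1) _ (by omega) (by omega)
    omega

lemma A_mono (s t t' : ℕ) (hs : 1 ≤ s) (ht : 1 ≤ t) (h : t ≤ t') : A s t ≤ A s t' := by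
  induction t' with
  | zero => omega
  | succ n ih =>
    rcases Nat.lt_or_ge t (n+1) with h' | h'
    · exact le_trans (ih (by omega)) (A_le_succ s n hs (by omega))
    · have : t = n + 1 := by omega
      subst this; exact le_refl _

lemma KK_pos : ∀ s t : ℕ, 1 ≤ s → 1 ≤ t → 1 ≤ K s t ∧ 1 ≤ K' s t
  | 0, _, h, _ => absurd h (by omega)
  | 1, t, _, _ => by constructor <;> simp [K, K', KK]
  | _+2, 0, _, h => absurd h (by omega)
  | s+2, 1, _, _ => by
    constructor <;> simp [K, K', KK] <;> exact Nat.one_le_two_pow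
  | s+2, t+2, _, _ => by
    obtain ⟨hk, hk'⟩ := KK_pos (s+2) (t+1) (by omega) (by omega)
    obtain ⟨hq, hq'⟩ := KK_pos (s+1) (K' (s+2) (t+1)) (by omega) hk'
    rw [K_rec, K'_rec]
    constructor
    · exact Nat.one_le_iff_ne_zero.mpr (by positivity)
    · omega
termination_by s t => (s, t)

lemma K_le_K' (s : ℕ) : ∀ t : ℕ, 1 ≤ s → 1 ≤ t → K s t ≤ K' s t := by
  intro t
  induction t with
  | zero => omega
  | succ n ih =>
    intro hs _
    match s, n with
    | 1, n => simp [K, K', KK]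
    | s+2, 0 => simp [K, K', KK]
    | s+2, n+1 =>
      rw [K_rec, K'_rec]
      have h1 : K (s+2) (n+1) ≤ K' (s+2) (n+1) := ih hs (by omega)
      have := Nat.mul_le_mul_right (K (s+1) (K' (s+2) (n+1))) h1
      omega

lemma main : ∀ s t : ℕ, 2 ≤ s → 1 ≤ t → A s t ≤ K s t
  | 0, _, h, _ => absurd h (by omega)
  | 1, _, h, _ => absurd h (by omega)
  | _, 0, _, h => absurd h (by omega)
  | 2, 1, _, _ => by simp [A, K, KK]
  | 2, t+2, _, _ => by
    have ih : A 2 (t+1) ≤ K 2 (t+1) := main 2 (t+1) (by omega) (by omega)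
    have hA : A 2 (t+2) = 2 * A 2 (t+1) := by rw [show (2:ℕ) = 0 + 2 from rfl, A_rec]; simp [A]
    have hK : K 2 (t+2) = K 2 (t+1) * 2 := by
      rw [show (2:ℕ) = 0 + 2 from rfl, K_rec]; simp [K, KK]
    omega
  | s+3, 1, _, _ => by
    have : A (s+3) 1 = 2 := by simp [A]
    have hK : K (s+3) 1 = 2^(s+3) := by simp [K, KK]
    have : (2:ℕ)^1 ≤ 2^(s+3) := Nat.pow_le_pow_right (by omega) (by omega)
    omega
  | s+3, t+2, _, _ => by
    have hs1 : (1:ℕ) ≤ s + 2 := by omega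
    obtain ⟨hkpos, hk'pos⟩ := KK_pos (s+3) (t+1) (by omega) (by omega)
    have ih1 : A (s+3) (t+1) ≤ K (s+3) (t+1) := main (s+3) (t+1) (by omega) (by omega)
    have h2 : K (s+3) (t+1) ≤ K' (s+3) (t+1) := K_le_K' (s+3) (t+1) (by omega) (by omega)
    have hApos : 1 ≤ A (s+3) (t+1) := by
      have := A_ge_two_mul (s+3) (t+1) (by omega) (by omega); omega
    have hmono : A (s+2) (A (s+3) (t+1)) ≤ A (s+2) (K' (s+3) (t+1)) :=
      A_mono (s+2) _ _ (by omega) hApos (by omega)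
    have ih2 : A (s+2) (K' (s+3) (t+1)) ≤ K (s+2) (K' (s+3) (t+1)) :=
      main (s+2) (K' (s+3) (t+1)) (by omega) hk'pos
    have hfin : K (s+2) (K' (s+3) (t+1)) ≤ K (s+3) (t+2) := by
      rw [show s + 3 = (s+1) + 2 from rfl, K_rec]
      calc K (s+2) (K' (s+3) (t+1))
          = 1 * K (s+2) (K' (s+3) (t+1)) := (one_mul _).symm
        _ ≤ K ((s+1)+2) (t+1) * K ((s+1)+1) (K' ((s+1)+2) (t+1)) := by
            apply Nat.mul_le_mul hkpos (le_refl _)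
    have hA := A_rec (s+1) t
    calc A (s+3) (t+2) = A (s+2) (A (s+3) (t+1)) := hA
      _ ≤ A (s+2) (K' (s+3) (t+1)) := hmono
      _ ≤ K (s+2) (K' (s+3) (t+1)) := ih2
      _ ≤ K (s+3) (t+2) := hfin
termination_by s t => (s, t)

/-- For all positive integers `s` and `t` with `s > 1`, `K(s,t) ≥ A(s,t)`. -/
theorem K_ge_ackermann (s t : ℕ) (hs : 1 < s) (ht : 0 < t) :
    A s t ≤ K s t := main s t hs ht
end
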